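/- arXiv:2508.01134 — 7 statements merged into one kernel-verified Lean document; each statement's English description precedes it below -/
import Mathlib

section
/- For every integer n ≥ 1 and every integer i with 1 ≤ i ≤ n², one has, as an identity of real numbers, (i mod n) = i − n · Σ_{j=1}^{n} [ max(0, 2·(i − j·n) + 3/2) − max(0, 2·(i − j·n) + 1/2) ]. (The modulus function on integers in [1, n²] is computed exactly by an affine combination of 2n ReLU units.) -/
theorem mod_eq_relu_sum (n i : ℤ) (hn : 1 ≤ n) (hi : 1 ≤ i) (hin : i ≤ n ^ 2) :
    ((i % n : ℤ) : ℝ) =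
      (i : ℝ) - (n : ℝ) * ∑ j ∈ Finset.Icc (1 : ℤ) n,
        (max 0 (2 * ((i : ℝ) - (j : ℝ) * (n : ℝ)) + 3 / 2) -
          max 0 (2 * ((i : ℝ) - (j : ℝ) * (n : ℝ)) + 1 / 2)) := by
  have hn0 : (0 : ℤ) < n := by linarith
  have hterm : ∀ j ∈ Finset.Icc (1 : ℤ) n,
      (max 0 (2 * ((i : ℝ) - (j : ℝ) * (n : ℝ)) + 3 / 2) -
        max 0 (2 * ((i : ℝ) - (j : ℝ) * (n : ℝ)) + 1 / 2))
      = if j * n ≤ i then (1 : ℝ) else 0 := by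
    intro j _
    by_cases h : j * n ≤ i
    · have h' : (1 : ℝ) ≤ (i : ℝ) - (j : ℝ) * (n : ℝ) + 1 := by
        have : ((j * n : ℤ) : ℝ) ≤ (i : ℝ) := by exact_mod_cast h
        push_cast at this ⊢; linarith
      rw [if_pos h, max_eq_right (by linarith), max_eq_right (by linarith)]
      ring
    · push_neg at h
      have h' : (i : ℝ) ≤ (j : ℝ) * (n : ℝ) - 1 := by
        have : (i : ℝ) ≤ ((j * n - 1 : ℤ) : ℝ) := by exact_mod_cast Int.le_sub_one_of_lt h
        push_cast at this; linarith
      rw [if_neg (not_le.mpr h), max_eq_left (by linarith), max_eq_left (by linarith)]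
      ring
  rw [Finset.sum_congr rfl hterm, Finset.sum_boole]
  have hfilter : (Finset.Icc (1 : ℤ) n).filter (fun j => j * n ≤ i) = Finset.Icc 1 (i / n) := by
    ext j
    simp only [Finset.mem_filter, Finset.mem_Icc]
    constructor
    · rintro ⟨⟨h1, _⟩, h3⟩
      exact ⟨h1, Int.le_ediv_iff_mul_le hn0 |>.mpr h3⟩
    · rintro ⟨h1, h2⟩
      have hdn : i / n ≤ n := by
        have := Int.ediv_le_ediv hn0 hin
        rwa [pow_two, Int.mul_ediv_cancel n (by omega)] at this
      exact ⟨⟨h1, le_trans h2 hdn⟩, (Int.le_ediv_iff_mul_le hn0).mp h2⟩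
  rw [hfilter]
  have hcard : (Finset.Icc (1 : ℤ) (i / n)).card = (i / n).toNat := by
    rw [Int.card_Icc]; omega
  have hd0 : 0 ≤ i / n := Int.ediv_nonneg (by linarith) (by linarith)
  rw [hcard, Int.emod_def]
  have hcast : (((i / n).toNat : ℕ) : ℝ) = ((i / n : ℤ) : ℝ) := by
    exact_mod_cast congrArg (fun z : ℤ => (z : ℝ)) (Int.toNat_of_nonneg hd0)
  rw [hcast]
  push_cast
  ring
end

section
/- For every integer n ≥ 1 there exist real numbers a_1, …, a_m, b_1, …, b_m, c_1, …, c_m with m = 2n + 1, all bounded in absolute value by 2n² + 2, such that for every integer i with 1 ≤ i ≤ n², Σ_{k=1}^{m} c_k · max(0, a_k·i + b_k) = i mod n. (A two-layer ReLU network of hidden dimension 2n + 1 with polynomially bounded weights computes i mod n exactly on integers i ∈ [1, n²].) -/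
noncomputable def reluB (n k : ℕ) : ℝ :=
  if k = 0 then 0 else -(((k + 1) / 2 : ℕ) : ℝ) * n + (if k % 2 = 1 then 1 else 0)

noncomputable def reluC (n k : ℕ) : ℝ :=
  if k = 0 then 1 else if k % 2 = 1 then -(n : ℝ) else n

lemma pair_sum (g : ℕ → ℝ) (N : ℕ) :
    ∑ k ∈ Finset.range (2 * N), g k = ∑ j ∈ Finset.range N, (g (2 * j) + g (2 * j + 1)) := by
  induction N with
  | zero => simp
  | succ m ih =>
      have : 2 * (m + 1) = 2 * m + 1 + 1 := by ring
      rw [this, Finset.sum_range_succ, Finset.sum_range_succ, Finset.sum_range_succ, ih]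
      ring

theorem relu_network_computes_mod (n : ℕ) (hn : 1 ≤ n) :
    ∃ a b c : Fin (2 * n + 1) → ℝ,
      (∀ k, |a k| ≤ 2 * (n : ℝ) ^ 2 + 2 ∧ |b k| ≤ 2 * (n : ℝ) ^ 2 + 2 ∧
        |c k| ≤ 2 * (n : ℝ) ^ 2 + 2) ∧
      ∀ i : ℤ, 1 ≤ i → i ≤ (n : ℤ) ^ 2 →
        ∑ k, c k * max 0 (a k * (i : ℝ) + b k) = ((i % (n : ℤ) : ℤ) : ℝ) := by
  have hn1 : (1 : ℝ) ≤ (n : ℝ) := by exact_mod_cast hn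
  refine ⟨fun _ => 1, fun k => reluB n k.val, fun k => reluC n k.val, ?_, ?_⟩
  · intro k
    have hk : (k : ℕ) ≤ 2 * n := by omega
    have hdiv : (((k : ℕ) + 1) / 2 : ℕ) ≤ n := by omega
    have hdivR : ((((k : ℕ) + 1) / 2 : ℕ) : ℝ) ≤ (n : ℝ) := by exact_mod_cast hdiv
    refine ⟨?_, ?_, ?_⟩
    · rw [abs_one]; nlinarith
    · show |reluB n k.val| ≤ _
      have hd0 : (0:ℝ) ≤ ((((k:ℕ) + 1) / 2 : ℕ) : ℝ) := Nat.cast_nonneg _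
      unfold reluB
      split_ifs <;> rw [abs_le] <;> constructor <;> nlinarith
    · show |reluC n k.val| ≤ _
      unfold reluC
      split_ifs <;> rw [abs_le] <;> constructor <;> nlinarith
  · intro i hi1 hi2
    have hn' : (0 : ℤ) < (n : ℤ) := by exact_mod_cast hn
    set f : ℕ → ℝ := fun m => reluC n m * max 0 (1 * (i : ℝ) + reluB n m) with hf
    have hsum : ∑ k : Fin (2 * n + 1), reluC n k.val * max 0 (1 * (i : ℝ) + reluB n k.val)
        = ∑ k ∈ Finset.range (2 * n + 1), f k := by
      exact Fin.sum_univ_eq_sum_range f (2 * n + 1)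
    rw [hsum, Finset.sum_range_succ' f (2 * n), pair_sum (fun k => f (k + 1)) n]
    have hf0 : f 0 = (i : ℝ) := by
      simp only [hf, reluB, reluC, if_pos rfl]
      rw [max_eq_right] <;> push_cast <;> linarith [(by exact_mod_cast hi1 : (1:ℝ) ≤ (i:ℝ))]
    have hterm : ∀ j ∈ Finset.range n,
        (f (2 * j + 1) + f (2 * j + 1 + 1))
          = -(n : ℝ) * (if ((j : ℤ) + 1) * (n : ℤ) ≤ i then 1 else 0) := by
      intro j _
      have h1 : (2 * j + 1) % 2 = 1 := by omega
      have h2 : (2 * j + 1 + 1) % 2 = 0 := by omega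
      have d1 : ((2 * j + 1) + 1) / 2 = j + 1 := by omega
      have d2 : ((2 * j + 1 + 1) + 1) / 2 = j + 1 := by omega
      simp only [hf, reluB, reluC, h1, h2, d1, d2]
      norm_num
      by_cases h : ((j : ℤ) + 1) * (n : ℤ) ≤ i
      · have hR : ((j : ℝ) + 1) * (n : ℝ) ≤ (i : ℝ) := by exact_mod_cast h
        rw [if_pos h, max_eq_right (by linarith), max_eq_right (by linarith)]
        ring
      · have h' : i + 1 ≤ ((j : ℤ) + 1) * (n : ℤ) := by omega
        have hR : (i : ℝ) + 1 ≤ ((j : ℝ) + 1) * (n : ℝ) := by exact_mod_cast h'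
        rw [if_neg h, max_eq_left (by linarith), max_eq_left (by linarith)]
        ring
    rw [Finset.sum_congr rfl hterm, hf0]
    rw [← Finset.mul_sum, Finset.sum_boole]
    have hq0 : 0 ≤ i / (n : ℤ) := Int.ediv_nonneg (by linarith) (le_of_lt hn')
    have hqn : i / (n : ℤ) ≤ (n : ℤ) := by
      calc i / (n : ℤ) ≤ (n : ℤ) ^ 2 / (n : ℤ) := Int.ediv_le_ediv hn' hi2
        _ = (n : ℤ) := by rw [sq, Int.mul_ediv_cancel _ (ne_of_gt hn')]
    have hfil : (Finset.range n).filter (fun j : ℕ => ((j : ℤ) + 1) * (n : ℤ) ≤ i)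
        = Finset.range (i / (n : ℤ)).toNat := by
      ext j
      simp only [Finset.mem_filter, Finset.mem_range]
      constructor
      · rintro ⟨-, h⟩
        have : (j : ℤ) + 1 ≤ i / (n : ℤ) := by
          rw [Int.le_ediv_iff_mul_le hn']; linarith [h]
        omega
      · intro h
        have hj : (j : ℤ) < i / (n : ℤ) := by omega
        have h1 : (j : ℤ) + 1 ≤ i / (n : ℤ) := hj
        have := (Int.le_ediv_iff_mul_le hn').mp h1
        constructor
        · omega
        · linarith
    rw [hfil, Finset.card_range]
    have hcast : (((i / (n : ℤ)).toNat : ℕ) : ℝ) = ((i / (n : ℤ) : ℤ) : ℝ) := by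
      exact_mod_cast Int.toNat_of_nonneg hq0
    rw [hcast]
    have hmod : (i % (n : ℤ)) = i - (n : ℤ) * (i / (n : ℤ)) := Int.emod_def i (n : ℤ)
    rw [hmod]
    push_cast
    ring
end

section
/- For every n ≥ 1, the softmax map from ℝⁿ to ℝⁿ, sending x to the vector whose i-th entry is exp(x_i) / Σ_{j=1}^{n} exp(x_j), is Lipschitz with constant 1 with respect to the Euclidean norm on both domain and codomain. -/
/-!
By the mean value inequality it suffices to bound the Jacobian `diag p - p pᵀ` of softmax at `x`,
where `p = softmax x`, by `1` in operator norm. The `i`-th coordinate of its value at `v` is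
`pᵢ (vᵢ - ⟪p, v⟫)`, so, as `0 ≤ pᵢ ≤ 1`, its squared norm is at most `∑ pᵢ (vᵢ - ⟪p, v⟫)²`: the
variance of `v` under the probability vector `p`, which is at most the second moment
`∑ pᵢ vᵢ² ≤ ‖v‖²`.
-/

noncomputable def softmax (n : ℕ) (x : EuclideanSpace ℝ (Fin n)) : EuclideanSpace ℝ (Fin n) :=
  WithLp.toLp 2 (fun i => Real.exp (x i) / ∑ j, Real.exp (x j))

open Finset Real ContinuousLinearMap

section

variable {ι : Type*} [Fintype ι]

theorem sum_exp_pos [Nonempty ι] (x : ι → ℝ) : 0 < ∑ j, exp (x j) :=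
  sum_pos (fun j _ => exp_pos (x j)) univ_nonempty

theorem sum_sq_mul_sub_sum_mul_le {p : ι → ℝ} (hp0 : ∀ i, 0 ≤ p i) (hp1 : ∑ i, p i = 1)
    (v : ι → ℝ) : ∑ i, (p i * (v i - ∑ j, p j * v j)) ^ 2 ≤ ∑ i, v i ^ 2 := by
  set m := ∑ j, p j * v j
  have hp_le_one (i : ι) : p i ≤ 1 := hp1 ▸ single_le_sum (fun j _ => hp0 j) (mem_univ i)
  have variance : ∑ i, p i * (v i - m) ^ 2 = ∑ i, p i * v i ^ 2 - m ^ 2 := by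
    have (i : ι) : p i * (v i - m) ^ 2 = p i * v i ^ 2 - 2 * m * (p i * v i) + m ^ 2 * p i := by
      ring
    simp only [this, sum_add_distrib, sum_sub_distrib, ← mul_sum, hp1]
    ring
  calc ∑ i, (p i * (v i - m)) ^ 2 = ∑ i, p i * (p i * (v i - m) ^ 2) := by
        simp only [mul_pow, sq (p _), mul_assoc]
    _ ≤ ∑ i, p i * (v i - m) ^ 2 :=
        sum_le_sum fun i _ => mul_le_of_le_one_left (mul_nonneg (hp0 i) (sq_nonneg _)) (hp_le_one i)
    _ ≤ ∑ i, p i * v i ^ 2 := variance ▸ sub_le_self _ (sq_nonneg m)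
    _ ≤ ∑ i, v i ^ 2 := sum_le_sum fun i _ => mul_le_of_le_one_left (sq_nonneg _) (hp_le_one i)

noncomputable def softmaxJacobian (p : EuclideanSpace ℝ ι) :
    EuclideanSpace ℝ ι →L[ℝ] EuclideanSpace ℝ ι :=
  (PiLp.continuousLinearEquiv 2 ℝ _).symm.toContinuousLinearMap ∘L
    ContinuousLinearMap.pi fun i => p i • (EuclideanSpace.proj i - innerSL ℝ p)

theorem softmaxJacobian_apply (p v : EuclideanSpace ℝ ι) (i : ι) :
    softmaxJacobian p v i = p i * (v i - ∑ j, p j * v j) := by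
  simp [softmaxJacobian, PiLp.inner_apply, mul_comm]

theorem norm_softmaxJacobian_le {p : EuclideanSpace ℝ ι} (hp0 : ∀ i, 0 ≤ p i)
    (hp1 : ∑ i, p i = 1) : ‖softmaxJacobian p‖ ≤ 1 := by
  refine opNorm_le_bound _ zero_le_one fun v => ?_
  rw [one_mul, ← pow_le_pow_iff_left₀ (norm_nonneg _) (norm_nonneg _) two_ne_zero,
    EuclideanSpace.norm_sq_eq, EuclideanSpace.norm_sq_eq]
  simpa only [Real.norm_eq_abs, sq_abs, softmaxJacobian_apply] using
    sum_sq_mul_sub_sum_mul_le hp0 hp1 v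

end

section

variable {n : ℕ} [NeZero n]

theorem softmax_nonneg (x : EuclideanSpace ℝ (Fin n)) (i : Fin n) : 0 ≤ softmax n x i :=
  div_nonneg (exp_pos _).le (sum_exp_pos x.ofLp).le

theorem sum_softmax (x : EuclideanSpace ℝ (Fin n)) : ∑ i, softmax n x i = 1 := by
  simp only [softmax, ← sum_div]
  exact div_self (sum_exp_pos x.ofLp).ne'

theorem hasFDerivAt_softmax_apply (x : EuclideanSpace ℝ (Fin n)) (i : Fin n) :
    HasFDerivAt (fun y => softmax n y i)
      (softmax n x i • (EuclideanSpace.proj i - innerSL ℝ (softmax n x))) x := by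
  have hS := (sum_exp_pos x.ofLp).ne'
  have hproj (j : Fin n) := PiLp.hasFDerivAt_apply (𝕜 := ℝ) 2 x j
  have hsum := HasFDerivAt.fun_sum fun j (_ : j ∈ univ) => (hproj j).exp
  have hquot := (hproj i).exp.mul ((hasDerivAt_inv hS).comp_hasFDerivAt x hsum)
  refine hquot.congr_fderiv ?_
  ext v
  have hmean : ∑ j, softmax n x j * v j = (∑ j, exp (x j) * v j) / ∑ j, exp (x j) := by
    simp only [softmax, div_mul_eq_mul_div, ← sum_div]
  simp only [neg_smul, smul_neg, Function.comp_apply, add_apply, neg_apply, smul_apply,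
    _root_.sum_apply, PiLp.proj_apply, smul_eq_mul, sub_apply, coe_innerSL_apply,
    PiLp.inner_apply, RCLike.inner_apply, ringHom_apply, mul_comm (v _), hmean]
  simp only [softmax]
  field_simp
  ring

theorem hasFDerivAt_softmax (x : EuclideanSpace ℝ (Fin n)) :
    HasFDerivAt (softmax n) (softmaxJacobian (softmax n x)) x :=
  (PiLp.hasFDerivAt_toLp 2 _).comp x (hasFDerivAt_pi.2 (hasFDerivAt_softmax_apply x))

end

theorem softmax_lipschitz_general (n : ℕ) : LipschitzWith 1 (softmax n) := by
  rcases n.eq_zero_or_pos with rfl | hn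
  · exact LipschitzWith.of_dist_le_mul fun x y => by simp [Subsingleton.elim x y]
  have : NeZero n := ⟨hn.ne'⟩
  refine lipschitzWith_of_nnnorm_fderiv_le (fun x => (hasFDerivAt_softmax x).differentiableAt)
    fun x => ?_
  rw [(hasFDerivAt_softmax x).fderiv, ← NNReal.coe_le_coe]
  exact norm_softmaxJacobian_le (softmax_nonneg x) (sum_softmax x)

theorem softmax_lipschitz (n : ℕ) (hn : 1 ≤ n) : LipschitzWith 1 (softmax n) :=
  softmax_lipschitz_general n
end

section
/- For every c > 0 and every real x, one has |x·Φ(c·x) − max(0, x)| ≤ 1/(c·√(2π)), where Φ is the cumulative distribution function of the standard Gaussian measure. In particular, the rescaled GeLU functions x ↦ x·Φ(c·x) converge to ReLU uniformly on ℝ as c → ∞. -/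
open ProbabilityTheory Real

/-- The cumulative distribution function of the standard Gaussian measure on ℝ. -/
noncomputable def stdGaussianCDF (x : ℝ) : ℝ := cdf (gaussianReal 0 1) x

/-!
With `t = c x`, the error is `t (1 - Φ t) / c` for `x ≥ 0` and `-t Φ t / c` for `x < 0`.
Both numerators are bounded by the Gaussian density `φ t ≤ 1 / √(2π)`: on `{s > t}` one has
`t ≤ s`, so `t (1 - Φ t) ≤ ∫_t^∞ s φ(s) ds = φ t` because `-φ` is a primitive of `s φ(s)`;
symmetrically on `{s ≤ t}`.
-/

open MeasureTheory Set Filter Topology NNReal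

section GaussianPDF

variable (μ : ℝ) (v : ℝ≥0)

lemma gaussianPDFReal_le_inv_sqrt (x : ℝ) : gaussianPDFReal μ v x ≤ (√(2 * π * v))⁻¹ :=
  mul_le_of_le_one_right (by positivity) <| exp_le_one_iff.mpr <|
    div_nonpos_of_nonpos_of_nonneg (neg_nonpos.mpr (sq_nonneg _)) (by positivity)

lemma hasDerivAt_gaussianPDFReal (x : ℝ) :
    HasDerivAt (gaussianPDFReal μ v) (-((x - μ) / v) * gaussianPDFReal μ v x) x := by
  have hexp : HasDerivAt (fun x ↦ -(x - μ) ^ 2 / (2 * v)) (-((x - μ) / v)) x := by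
    refine ((((hasDerivAt_id x).sub_const μ).pow 2).neg.div_const (2 * (v : ℝ))).congr_deriv ?_
    simp only [id]
    ring
  refine (hexp.exp.const_mul (√(2 * π * v))⁻¹).congr_deriv ?_
  rw [gaussianPDFReal]
  ring

lemma integrable_sub_mul_gaussianPDFReal :
    Integrable fun x ↦ (x - μ) * gaussianPDFReal μ v x := by
  rcases eq_or_ne v 0 with rfl | hv
  · simp
  have hb : 0 < (2 * (v : ℝ))⁻¹ := by positivity
  refine (((integrable_mul_exp_neg_mul_sq hb).comp_sub_right μ).const_mul
    (√(2 * π * v))⁻¹).congr (ae_of_all _ fun x ↦ ?_)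
  simp only [gaussianPDFReal, neg_div, div_eq_inv_mul (_ ^ 2)]
  ring_nf

variable {v} in
lemma hasDerivAt_neg_mul_gaussianPDFReal (hv : v ≠ 0) (x : ℝ) :
    HasDerivAt (fun x ↦ -(v * gaussianPDFReal μ v x)) ((x - μ) * gaussianPDFReal μ v x) x := by
  refine ((hasDerivAt_gaussianPDFReal μ v x).const_mul (v : ℝ)).neg.congr_deriv ?_
  field_simp

lemma integral_Ioi_sub_mul_gaussianPDFReal (a : ℝ) :
    ∫ x in Ioi a, (x - μ) * gaussianPDFReal μ v x = v * gaussianPDFReal μ v a := by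
  rcases eq_or_ne v 0 with rfl | hv
  · simp
  have hderiv := hasDerivAt_neg_mul_gaussianPDFReal μ hv
  have hint := (integrable_sub_mul_gaussianPDFReal μ v).integrableOn (s := Ioi a)
  have hlim := tendsto_zero_of_hasDerivAt_of_integrableOn_Ioi (fun x _ ↦ hderiv x) hint
    ((integrable_gaussianPDFReal μ v).const_mul v).neg.integrableOn
  rw [integral_Ioi_of_hasDerivAt_of_tendsto' (fun x _ ↦ hderiv x) hint hlim]
  ring

lemma integral_Iic_sub_mul_gaussianPDFReal (a : ℝ) :
    ∫ x in Iic a, (x - μ) * gaussianPDFReal μ v x = -(v * gaussianPDFReal μ v a) := by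
  rcases eq_or_ne v 0 with rfl | hv
  · simp
  have hderiv := hasDerivAt_neg_mul_gaussianPDFReal μ hv
  have hint := (integrable_sub_mul_gaussianPDFReal μ v).integrableOn (s := Iic a)
  have hlim := tendsto_zero_of_hasDerivAt_of_integrableOn_Iic (fun x _ ↦ hderiv x) hint
    ((integrable_gaussianPDFReal μ v).const_mul v).neg.integrableOn
  rw [integral_Iic_of_hasDerivAt_of_tendsto' (fun x _ ↦ hderiv x) hint hlim]
  ring

variable {v} in
lemma measureReal_gaussianReal (hv : v ≠ 0) (s : Set ℝ) :
    (gaussianReal μ v).real s = ∫ x in s, gaussianPDFReal μ v x := by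
  rw [measureReal_def, gaussianReal_apply_eq_integral μ hv, ENNReal.toReal_ofReal]
  exact integral_nonneg (gaussianPDFReal_nonneg μ v)

variable {v} in
lemma sub_mul_measureReal_Ioi_gaussianReal_le (hv : v ≠ 0) (t : ℝ) :
    (t - μ) * (gaussianReal μ v).real (Ioi t) ≤ v * gaussianPDFReal μ v t := by
  rw [measureReal_gaussianReal μ hv, ← integral_Ioi_sub_mul_gaussianPDFReal,
    ← integral_const_mul]
  refine setIntegral_mono_on ((integrable_gaussianPDFReal μ v).const_mul _).integrableOn
    (integrable_sub_mul_gaussianPDFReal μ v).integrableOn measurableSet_Ioi fun x hx ↦ ?_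
  exact mul_le_mul_of_nonneg_right (by linarith [hx.out]) (gaussianPDFReal_nonneg μ v x)

variable {v} in
lemma sub_mul_measureReal_Iic_gaussianReal_le (hv : v ≠ 0) (t : ℝ) :
    (μ - t) * (gaussianReal μ v).real (Iic t) ≤ v * gaussianPDFReal μ v t := by
  rw [measureReal_gaussianReal μ hv, ← neg_neg ((v : ℝ) * _),
    ← integral_Iic_sub_mul_gaussianPDFReal, ← integral_neg, ← integral_const_mul]
  refine setIntegral_mono_on ((integrable_gaussianPDFReal μ v).const_mul _).integrableOn
    (integrable_sub_mul_gaussianPDFReal μ v).neg.integrableOn measurableSet_Iic fun x hx ↦ ?_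
  rw [← neg_mul]
  exact mul_le_mul_of_nonneg_right (by linarith [hx.out]) (gaussianPDFReal_nonneg μ v x)

end GaussianPDF

lemma one_sub_stdGaussianCDF (t : ℝ) :
    1 - stdGaussianCDF t = (gaussianReal 0 1).real (Ioi t) := by
  rw [stdGaussianCDF, cdf_eq_real, ← compl_Iic, probReal_compl_eq_one_sub measurableSet_Iic]

lemma mul_one_sub_stdGaussianCDF_le (t : ℝ) : t * (1 - stdGaussianCDF t) ≤ (√(2 * π))⁻¹ :=
  calc t * (1 - stdGaussianCDF t) = (t - 0) * (gaussianReal 0 1).real (Ioi t) := by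
        rw [one_sub_stdGaussianCDF, sub_zero]
    _ ≤ (1 : ℝ≥0) * gaussianPDFReal 0 1 t :=
        sub_mul_measureReal_Ioi_gaussianReal_le 0 one_ne_zero t
    _ ≤ (√(2 * π))⁻¹ := by simpa using gaussianPDFReal_le_inv_sqrt 0 1 t

lemma neg_mul_stdGaussianCDF_le (t : ℝ) : -t * stdGaussianCDF t ≤ (√(2 * π))⁻¹ :=
  calc -t * stdGaussianCDF t = (0 - t) * (gaussianReal 0 1).real (Iic t) := by
        rw [stdGaussianCDF, cdf_eq_real, zero_sub]
    _ ≤ (1 : ℝ≥0) * gaussianPDFReal 0 1 t :=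
        sub_mul_measureReal_Iic_gaussianReal_le 0 one_ne_zero t
    _ ≤ (√(2 * π))⁻¹ := by simpa using gaussianPDFReal_le_inv_sqrt 0 1 t

theorem scaled_gelu_approx_relu (c : ℝ) (hc : 0 < c) (x : ℝ) :
    |x * stdGaussianCDF (c * x) - max 0 x| ≤ 1 / (c * Real.sqrt (2 * π)) := by
  rw [one_div, mul_inv, ← div_eq_inv_mul, le_div_iff₀ hc]
  rcases le_or_gt 0 x with hx | hx
  · have hΦ : stdGaussianCDF (c * x) ≤ 1 := cdf_le_one _ _
    calc |x * stdGaussianCDF (c * x) - max 0 x| * c = c * x * (1 - stdGaussianCDF (c * x)) := by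
          rw [max_eq_right hx, abs_of_nonpos (by nlinarith)]
          ring
      _ ≤ (√(2 * π))⁻¹ := mul_one_sub_stdGaussianCDF_le _
  · have hΦ : 0 ≤ stdGaussianCDF (c * x) := cdf_nonneg _ _
    calc |x * stdGaussianCDF (c * x) - max 0 x| * c = -(c * x) * stdGaussianCDF (c * x) := by
          rw [max_eq_left hx.le, sub_zero, abs_of_nonpos (by nlinarith)]
          ring
      _ ≤ (√(2 * π))⁻¹ := neg_mul_stdGaussianCDF_le _
end

section
/- Let d₁, d₂ ≥ 1, let W₁ be a real m × d₁ matrix, b₁ ∈ ℝ^m, W₂ a real d₂ × m matrix, b₂ ∈ ℝ^{d₂}, and let g : ℝ^{d₁} → ℝ^{d₂} be the two-layer ReLU network g(x) = W₂·ReLU(W₁ x + b₁) + b₂ (ReLU applied componentwise). Then for every ε > 0 there exist W₁' (m × d₁), b₁' ∈ ℝ^m, W₂' (d₂ × m), b₂' ∈ ℝ^{d₂} such that the two-layer GeLU network f(x) = W₂'·GeLU(W₁' x + b₁') + b₂' satisfies sup over all x ∈ ℝ^{d₁} of ‖f(x) − g(x)‖_∞ ≤ ε. -/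
/-!
GeLU differs from ReLU by a bounded amount: if `X` is a standard Gaussian, then
`|gelu y - relu y|` is `|y| P(X ≤ y)` for `y ≤ 0` and `y P(X > y)` for `y > 0`, and by Markov's
inequality both are at most `E|X|`. Since ReLU is positively homogeneous, `c⁻¹ gelu (c y)` is then
within `E|X| / c` of `relu y` for every `y`, and the factors `c` and `c⁻¹` are absorbed into the
first and second layer of the network.
-/

open ProbabilityTheory

/-- The GeLU activation function. -/
noncomputable def gelu (x : ℝ) : ℝ := x * stdGaussianCDF x

open MeasureTheory Set Matrix

section CDF

variable (μ : Measure ℝ) [IsProbabilityMeasure μ]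

lemma mul_measureReal_le_integral_abs (hμ : Integrable id μ) {t : ℝ} (ht : 0 ≤ t) {s : Set ℝ}
    (hs : s ⊆ {x | t ≤ |x|}) : t * μ.real s ≤ ∫ x, |x| ∂μ :=
  calc t * μ.real s ≤ t * μ.real {x | t ≤ |x|} :=
        mul_le_mul_of_nonneg_left (measureReal_mono hs) ht
    _ ≤ ∫ x, |x| ∂μ :=
        mul_meas_ge_le_integral_of_nonneg (ae_of_all _ fun x => abs_nonneg x) hμ.abs t

lemma abs_mul_cdf_sub_max_le (hμ : Integrable id μ) (y : ℝ) :
    |y * cdf μ y - max 0 y| ≤ ∫ x, |x| ∂μ := by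
  rcases le_or_gt y 0 with hy | hy
  · have hIic : Iic y ⊆ {x | -y ≤ |x|} := fun x (hx : x ≤ y) =>
      show -y ≤ |x| by linarith [neg_le_abs x]
    rw [max_eq_left hy, sub_zero, abs_mul, abs_of_nonpos hy, abs_of_nonneg (cdf_nonneg μ y),
      cdf_eq_real]
    exact mul_measureReal_le_integral_abs μ hμ (neg_nonneg.mpr hy) hIic
  · have hIoi : Ioi y ⊆ {x | y ≤ |x|} := fun x (hx : y < x) =>
      show y ≤ |x| by linarith [le_abs_self x]
    have htail : 1 - cdf μ y = μ.real (Ioi y) := by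
      rw [← compl_Iic, measureReal_compl measurableSet_Iic, probReal_univ, cdf_eq_real]
    have hdiff : y * cdf μ y - max 0 y = -(y * μ.real (Ioi y)) := by
      rw [max_eq_right hy.le, ← htail]; ring
    rw [hdiff, abs_neg, abs_of_nonneg (by positivity)]
    exact mul_measureReal_le_integral_abs μ hμ hy.le hIoi

end CDF

lemma abs_gelu_sub_max_le (y : ℝ) : |gelu y - max 0 y| ≤ ∫ x, |x| ∂gaussianReal 0 1 :=
  abs_mul_cdf_sub_max_le _ IsGaussian.integrable_id y

lemma abs_inv_mul_comp_mul_sub_max_le {σ : ℝ → ℝ} {C : ℝ} (hσ : ∀ y, |σ y - max 0 y| ≤ C)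
    {c : ℝ} (hc : 0 < c) (y : ℝ) : |c⁻¹ * σ (c * y) - max 0 y| ≤ C / c := by
  have hmax : max 0 (c * y) = c * max 0 y := by rw [mul_max_of_nonneg _ _ hc.le, mul_zero]
  have hrescale : c⁻¹ * σ (c * y) - max 0 y = c⁻¹ * (σ (c * y) - max 0 (c * y)) := by
    rw [hmax, mul_sub, inv_mul_cancel_left₀ hc.ne']
  rw [hrescale, abs_mul, abs_of_pos (inv_pos.mpr hc), inv_mul_eq_div]
  exact div_le_div_of_nonneg_right (hσ _) hc.le

def twoLayerNet {ι κ τ : Type*} [Fintype ι] [Fintype κ] (σ : ℝ → ℝ) (W₁ : Matrix κ ι ℝ) (b₁ : κ → ℝ)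
    (W₂ : Matrix τ κ ℝ) (b₂ : τ → ℝ) (x : ι → ℝ) : τ → ℝ :=
  W₂ *ᵥ (fun k => σ ((W₁ *ᵥ x + b₁) k)) + b₂

attribute [local instance] Matrix.linftyOpNormedAddCommGroup

lemma norm_twoLayerNet_rescale_sub_le {ι κ τ : Type*} [Fintype ι] [Fintype κ] [Fintype τ]
    {σ : ℝ → ℝ} {C : ℝ} (hσ : ∀ y, |σ y - max 0 y| ≤ C) {c : ℝ} (hc : 0 < c)
    (W₁ : Matrix κ ι ℝ) (b₁ : κ → ℝ) (W₂ : Matrix τ κ ℝ) (b₂ : τ → ℝ) (x : ι → ℝ) :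
    ‖twoLayerNet σ (c • W₁) (c • b₁) (c⁻¹ • W₂) b₂ x - twoLayerNet (max 0) W₁ b₁ W₂ b₂ x‖ ≤
      ‖W₂‖ * (C / c) := by
  set z := W₁ *ᵥ x + b₁
  have hdiff : twoLayerNet σ (c • W₁) (c • b₁) (c⁻¹ • W₂) b₂ x - twoLayerNet (max 0) W₁ b₁ W₂ b₂ x
      = W₂ *ᵥ fun k => c⁻¹ * σ (c * z k) - max 0 (z k) := by
    have hz : (c • W₁) *ᵥ x + c • b₁ = c • z := by rw [smul_mulVec, smul_add]
    rw [twoLayerNet, twoLayerNet, hz, smul_mulVec, ← mulVec_smul, add_sub_add_right_eq_sub,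
      ← mulVec_sub]
    rfl
  have hC : 0 ≤ C := (abs_nonneg _).trans (hσ 0)
  rw [hdiff]
  refine (Matrix.linfty_opNorm_mulVec _ _).trans (mul_le_mul_of_nonneg_left ?_ (norm_nonneg _))
  refine (pi_norm_le_iff_of_nonneg (by positivity)).mpr fun k => ?_
  exact (Real.norm_eq_abs _).trans_le (abs_inv_mul_comp_mul_sub_max_le hσ hc _)

theorem relu_mlp_approx_by_gelu_mlp_general (d₁ d₂ m : ℕ)
    (W₁ : Matrix (Fin m) (Fin d₁) ℝ) (b₁ : Fin m → ℝ)
    (W₂ : Matrix (Fin d₂) (Fin m) ℝ) (b₂ : Fin d₂ → ℝ)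
    (ε : ℝ) (hε : 0 < ε) :
    ∃ (W₁' : Matrix (Fin m) (Fin d₁) ℝ) (b₁' : Fin m → ℝ)
      (W₂' : Matrix (Fin d₂) (Fin m) ℝ) (b₂' : Fin d₂ → ℝ),
      ∀ x : Fin d₁ → ℝ,
        ‖(W₂'.mulVec (fun k => gelu ((W₁'.mulVec x + b₁') k)) + b₂') -
          (W₂.mulVec (fun k => max 0 ((W₁.mulVec x + b₁) k)) + b₂)‖ ≤ ε := by
  set C := ∫ x, |x| ∂gaussianReal 0 1
  have hC : 0 ≤ C := integral_nonneg fun x => abs_nonneg x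
  set c := (‖W₂‖ * C + 1) / ε with hc_def
  have hc : 0 < c := by positivity
  refine ⟨c • W₁, c • b₁, c⁻¹ • W₂, b₂, fun x => ?_⟩
  calc _ ≤ ‖W₂‖ * (C / c) :=
        norm_twoLayerNet_rescale_sub_le abs_gelu_sub_max_le hc W₁ b₁ W₂ b₂ x
    _ ≤ ε := by
      rw [mul_div_assoc', div_le_iff₀ hc, hc_def, mul_div_cancel₀ _ hε.ne']
      exact le_add_of_nonneg_right zero_le_one

/-- Any two-layer ReLU network can be uniformly approximated on all of ℝ^{d₁}
by a two-layer GeLU network of the same architecture; the norm on `Fin d₂ → ℝ`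
is the sup (max-coordinate) norm. -/
theorem relu_mlp_approx_by_gelu_mlp (d₁ d₂ m : ℕ) (hd₁ : 1 ≤ d₁) (hd₂ : 1 ≤ d₂)
    (W₁ : Matrix (Fin m) (Fin d₁) ℝ) (b₁ : Fin m → ℝ)
    (W₂ : Matrix (Fin d₂) (Fin m) ℝ) (b₂ : Fin d₂ → ℝ)
    (ε : ℝ) (hε : 0 < ε) :
    ∃ (W₁' : Matrix (Fin m) (Fin d₁) ℝ) (b₁' : Fin m → ℝ)
      (W₂' : Matrix (Fin d₂) (Fin m) ℝ) (b₂' : Fin d₂ → ℝ),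
      ∀ x : Fin d₁ → ℝ,
        ‖(W₂'.mulVec (fun k => gelu ((W₁'.mulVec x + b₁') k)) + b₂') -
          (W₂.mulVec (fun k => max 0 ((W₁.mulVec x + b₁) k)) + b₂)‖ ≤ ε :=
  relu_mlp_approx_by_gelu_mlp_general d₁ d₂ m W₁ b₁ W₂ b₂ ε hε
end

section
/- There exist a constant C > 0 and an exponent k ∈ ℕ such that for every ε > 0 and M > 0 there exist a real 4 × 2 matrix W₁, a vector b₁ ∈ ℝ⁴, and a vector w₂ ∈ ℝ⁴, all of whose entries are bounded in absolute value by C·(M + 1/ε)^k, such that the two-layer GeLU network f(a, b) = Σ_{k'=1}^{4} (w₂)_{k'} · GeLU( (W₁·(a, b) + b₁)_{k'} ) satisfies |f(a, b) − a·b| ≤ ε for all a, b ∈ [−M, M]. -/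
open ProbabilityTheory

/-!
The even part of GeLU is `gelu x + gelu (-x) = x (Φ(x) - Φ(-x)) = x ∫_{-x}^{x} φ`, and since the
density `φ` is within `φ(0) t² / 2` of `φ(0) = (√(2π))⁻¹`, this equals `2 φ(0) x² + O(x⁴)`.
Polarisation `4ab = (a + b)² - (a - b)²` then turns four GeLU neurons with inner weights `± h`
into the product `ab` up to an error `O(h² M⁴)`, once the outer weight is `w = 1 / (8 φ(0) h²)`.
Taking `h = Q⁻³` with `Q = M + 1/ε` makes the error at most `ε` and all weights at most `Q⁶`;
when `Q < 1` the zero network already works, since then `|ab| ≤ M² < 1 < ε`.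
-/

open MeasureTheory Real

noncomputable section

lemma stdGaussianCDF_eq_integral (x : ℝ) :
    stdGaussianCDF x = ∫ t in Set.Iic x, gaussianPDFReal 0 1 t := by
  rw [stdGaussianCDF, cdf_eq_real, measureReal_def, gaussianReal_apply_eq_integral 0 one_ne_zero,
    ENNReal.toReal_ofReal
      (setIntegral_nonneg measurableSet_Iic fun t _ => gaussianPDFReal_nonneg 0 1 t)]

lemma stdGaussianCDF_sub_stdGaussianCDF (x y : ℝ) :
    stdGaussianCDF x - stdGaussianCDF y = ∫ t in y..x, gaussianPDFReal 0 1 t := by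
  rw [stdGaussianCDF_eq_integral, stdGaussianCDF_eq_integral,
    ← intervalIntegral.integral_Iic_sub_Iic (integrable_gaussianPDFReal 0 1).integrableOn
      (integrable_gaussianPDFReal 0 1).integrableOn]

lemma gelu_add_gelu_neg (x : ℝ) :
    gelu x + gelu (-x) = x * ∫ t in (-x)..x, gaussianPDFReal 0 1 t := by
  rw [← stdGaussianCDF_sub_stdGaussianCDF, gelu, gelu]
  ring

lemma abs_gaussianPDFReal_sub_le (t : ℝ) :
    |gaussianPDFReal 0 1 t - (√(2 * π))⁻¹| ≤ (√(2 * π))⁻¹ / 2 * t ^ 2 := by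
  have hc : 0 < (√(2 * π))⁻¹ := by positivity
  have hexp_le : rexp (-t ^ 2 / 2) ≤ 1 := exp_le_one_iff.mpr (by nlinarith [sq_nonneg t])
  have hexp_ge : 1 - t ^ 2 / 2 ≤ rexp (-t ^ 2 / 2) := by
    linarith [add_one_le_exp (-t ^ 2 / 2)]
  simp only [gaussianPDFReal, NNReal.coe_one, mul_one, sub_zero]
  rw [abs_le]
  constructor <;> nlinarith

lemma abs_integral_gaussianPDFReal_sub_le {x : ℝ} (hx : 0 ≤ x) :
    |(∫ t in (-x)..x, gaussianPDFReal 0 1 t) - 2 * (√(2 * π))⁻¹ * x|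
      ≤ (√(2 * π))⁻¹ / 3 * x ^ 3 := by
  set c := (√(2 * π))⁻¹
  have hφ : IntervalIntegrable (gaussianPDFReal 0 1) volume (-x) x :=
    (integrable_gaussianPDFReal 0 1).intervalIntegrable
  have hsub : (∫ t in (-x)..x, gaussianPDFReal 0 1 t) - 2 * c * x
      = ∫ t in (-x)..x, (gaussianPDFReal 0 1 t - c) := by
    rw [intervalIntegral.integral_sub hφ intervalIntegrable_const,
      intervalIntegral.integral_const, smul_eq_mul]
    ring
  have hbound : IntervalIntegrable (fun t : ℝ => c / 2 * t ^ 2) volume (-x) x :=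
    (continuous_const.mul (continuous_pow 2)).intervalIntegrable _ _
  calc |(∫ t in (-x)..x, gaussianPDFReal 0 1 t) - 2 * c * x|
      ≤ ∫ t in (-x)..x, c / 2 * t ^ 2 := by
        rw [hsub, ← norm_eq_abs]
        exact intervalIntegral.norm_integral_le_of_norm_le (by linarith)
          (Filter.Eventually.of_forall fun t _ => abs_gaussianPDFReal_sub_le t) hbound
    _ = c / 3 * x ^ 3 := by
        rw [intervalIntegral.integral_const_mul, integral_pow]
        ring

lemma abs_gelu_add_gelu_neg_sub_le (x : ℝ) :
    |gelu x + gelu (-x) - 2 * (√(2 * π))⁻¹ * x ^ 2| ≤ (√(2 * π))⁻¹ / 3 * x ^ 4 := by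
  wlog hx : 0 ≤ x generalizing x
  · simpa [add_comm, Even.neg_pow (by decide : Even 4)] using this (-x) (by linarith)
  rw [gelu_add_gelu_neg, show x ^ 2 = x * x by ring, show x ^ 4 = x * x ^ 3 by ring,
    ← mul_left_comm, ← mul_sub, abs_mul, abs_of_nonneg hx, ← mul_left_comm x]
  exact mul_le_mul_of_nonneg_left (abs_integral_gaussianPDFReal_sub_le hx) hx

def geluNet {m n : ℕ} (W₁ : Matrix (Fin m) (Fin n) ℝ) (b₁ w₂ : Fin m → ℝ) (x : Fin n → ℝ) :
    ℝ :=
  ∑ i, w₂ i * gelu ((W₁.mulVec x + b₁) i)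

def productInnerWeights (h : ℝ) : Matrix (Fin 4) (Fin 2) ℝ := !![h, h; -h, -h; h, -h; -h, h]

def productOuterWeights (w : ℝ) : Fin 4 → ℝ := ![w, w, -w, -w]

lemma abs_productInnerWeights_le (h : ℝ) (i : Fin 4) (j : Fin 2) :
    |productInnerWeights h i j| ≤ |h| := by
  fin_cases i <;> fin_cases j <;> simp [productInnerWeights]

lemma abs_productOuterWeights_le (w : ℝ) (i : Fin 4) : |productOuterWeights w i| ≤ |w| := by
  fin_cases i <;> simp [productOuterWeights]

lemma geluNet_product (h w a b : ℝ) :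
    geluNet (productInnerWeights h) 0 (productOuterWeights w) ![a, b]
      = w * (gelu (h * (a + b)) + gelu (-(h * (a + b))))
        - w * (gelu (h * (a - b)) + gelu (-(h * (a - b)))) := by
  simp only [geluNet, productOuterWeights, productInnerWeights, Matrix.mulVec_cons,
    Matrix.mulVec_empty, add_zero, Pi.add_apply, Pi.smul_apply, Function.comp_apply, smul_eq_mul,
    Pi.zero_apply, Fin.sum_univ_four, Matrix.cons_val, Matrix.head_cons, Matrix.tail_cons]
  ring_nf

lemma abs_geluNet_product_sub_mul_le {h w M a b : ℝ} (hw : 0 ≤ w)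
    (hwh : (√(2 * π))⁻¹ * w * h ^ 2 = 1 / 8) (ha : |a| ≤ M) (hb : |b| ≤ M) :
    |geluNet (productInnerWeights h) 0 (productOuterWeights w) ![a, b] - a * b|
      ≤ 2 / 3 * h ^ 2 * M ^ 4 := by
  set c := (√(2 * π))⁻¹
  have hu := abs_gelu_add_gelu_neg_sub_le (h * (a + b))
  have hv := abs_gelu_add_gelu_neg_sub_le (h * (a - b))
  have hpow : (a + b) ^ 4 + (a - b) ^ 4 ≤ 16 * M ^ 4 := by
    have ha2 : a ^ 2 ≤ M ^ 2 := sq_le_sq' (abs_le.mp ha).1 (abs_le.mp ha).2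
    have hb2 : b ^ 2 ≤ M ^ 2 := sq_le_sq' (abs_le.mp hb).1 (abs_le.mp hb).2
    nlinarith [sq_nonneg a, sq_nonneg b, mul_le_mul ha2 hb2 (sq_nonneg b) (sq_nonneg M)]
  -- polarisation: the quadratic main terms add up to `8 c w h² ab = ab`
  have hsplit : geluNet (productInnerWeights h) 0 (productOuterWeights w) ![a, b] - a * b
      = w * (gelu (h * (a + b)) + gelu (-(h * (a + b))) - 2 * c * (h * (a + b)) ^ 2)
        - w * (gelu (h * (a - b)) + gelu (-(h * (a - b))) - 2 * c * (h * (a - b)) ^ 2) := by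
    rw [geluNet_product]
    linear_combination (8 * a * b) * hwh
  calc _ ≤ w * (c / 3 * (h * (a + b)) ^ 4) + w * (c / 3 * (h * (a - b)) ^ 4) := by
        rw [hsplit]
        refine (abs_sub _ _).trans (add_le_add ?_ ?_) <;>
          rw [abs_mul, abs_of_nonneg hw] <;> gcongr
    _ = c * w * h ^ 2 * h ^ 2 / 3 * ((a + b) ^ 4 + (a - b) ^ 4) := by ring
    _ ≤ c * w * h ^ 2 * h ^ 2 / 3 * (16 * M ^ 4) := by rw [hwh]; gcongr
    _ = 2 / 3 * h ^ 2 * M ^ 4 := by rw [hwh]; ring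

lemma abs_geluNet_product_inv_pow_sub_mul_le {ε M Q a b : ℝ} (hε : 0 < ε) (hQ1 : 1 ≤ Q)
    (hMQ : M ≤ Q) (hεQ : 1 / ε ≤ Q) (ha : |a| ≤ M) (hb : |b| ≤ M) :
    |geluNet (productInnerWeights (Q ^ 3)⁻¹) 0 (productOuterWeights (√(2 * π) / 8 * Q ^ 6))
        ![a, b] - a * b| ≤ ε := by
  have hQ : 0 < Q := one_pos.trans_le hQ1
  have hM : 0 ≤ M := (abs_nonneg a).trans ha
  have hwh : (√(2 * π))⁻¹ * (√(2 * π) / 8 * Q ^ 6) * ((Q ^ 3)⁻¹) ^ 2 = 1 / 8 := by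
    field_simp
  calc _ ≤ 2 / 3 * ((Q ^ 3)⁻¹) ^ 2 * M ^ 4 :=
        abs_geluNet_product_sub_mul_le (by positivity) hwh ha hb
    _ ≤ 2 / 3 * ((Q ^ 3)⁻¹) ^ 2 * Q ^ 4 := by gcongr
    _ = 2 / 3 / Q / Q := by field_simp
    _ ≤ 1 / Q := by gcongr; exact (div_le_self (by norm_num) hQ1).trans (by norm_num)
    _ ≤ 1 / (1 / ε) := one_div_le_one_div_of_le (by positivity) hεQ
    _ = ε := one_div_one_div ε

end

/-- A two-layer GeLU MLP with hidden dimension 4 and parameters polynomially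
bounded in M and 1/ε approximates the product function on [−M, M]². -/
theorem gelu_mlp_approx_product :
    ∃ C > (0 : ℝ), ∃ k : ℕ, ∀ ε > (0 : ℝ), ∀ M > (0 : ℝ),
      ∃ (W₁ : Matrix (Fin 4) (Fin 2) ℝ) (b₁ : Fin 4 → ℝ) (w₂ : Fin 4 → ℝ),
        (∀ k' j, |W₁ k' j| ≤ C * (M + 1 / ε) ^ k) ∧
        (∀ k', |b₁ k'| ≤ C * (M + 1 / ε) ^ k) ∧
        (∀ k', |w₂ k'| ≤ C * (M + 1 / ε) ^ k) ∧
        ∀ a b : ℝ, a ∈ Set.Icc (-M) M → b ∈ Set.Icc (-M) M →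
          |(∑ k', w₂ k' * gelu ((W₁.mulVec ![a, b] + b₁) k')) - a * b| ≤ ε := by
  refine ⟨1, one_pos, 6, fun ε hε M hM => ?_⟩
  have hMQ : M ≤ M + 1 / ε := le_add_of_nonneg_right (by positivity)
  have hεQ : 1 / ε ≤ M + 1 / ε := le_add_of_nonneg_left hM.le
  rcases lt_or_ge (M + 1 / ε) 1 with hQ1 | hQ1
  · have hε1 : 1 < ε := (div_lt_one hε).mp (hεQ.trans_lt hQ1)
    refine ⟨0, 0, 0, fun _ _ => by simp; positivity, fun _ => by simp; positivity,
      fun _ => by simp; positivity, fun a b ha hb => ?_⟩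
    simp only [Pi.zero_apply, zero_mul, Finset.sum_const_zero, zero_sub, abs_neg, abs_mul]
    nlinarith [abs_nonneg a, abs_nonneg b, abs_le.mpr ha, abs_le.mpr hb]
  · set Q := M + 1 / ε
    have hQ6 : 1 ≤ Q ^ 6 := one_le_pow₀ hQ1
    refine ⟨productInnerWeights (Q ^ 3)⁻¹, 0, productOuterWeights (√(2 * π) / 8 * Q ^ 6),
      fun i j => ?_, fun _ => by simp; positivity, fun i => ?_, fun a b ha hb =>
      abs_geluNet_product_inv_pow_sub_mul_le hε hQ1 hMQ hεQ (abs_le.mpr ha) (abs_le.mpr hb)⟩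
    · refine (abs_productInnerWeights_le _ i j).trans ?_
      rw [abs_of_pos (by positivity), one_mul]
      exact (inv_le_one_of_one_le₀ (one_le_pow₀ hQ1)).trans hQ6
    · have hπ : √(2 * π) ≤ 8 := by
        rw [sqrt_le_left (by norm_num)]
        nlinarith [pi_lt_four]
      refine (abs_productOuterWeights_le _ i).trans ?_
      rw [abs_of_pos (by positivity), one_mul]
      nlinarith
end

section
/- Let d ≥ 1 and define the selection function g : ℝ^d × ℝ^d × ℝ → ℝ^d by g(x, y, t) = x if t ≥ 0 and g(x, y, t) = y if t < 0. Then for every ε > 0, α > 0 and M > 0 there exist a real (2d + 2) × (2d + 1) matrix W₁, a vector b₁ ∈ ℝ^{2d+2}, and a real d × (2d + 2) matrix W₂ such that the two-layer GeLU network f(x, y, t) = W₂·GeLU(W₁·(x, y, t) + b₁) satisfies ‖f(x, y, t) − g(x, y, t)‖_∞ ≤ ε for all x ∈ [−M, M]^d, y ∈ [−M, M]^d, and all real t with |t| ≥ α. -/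
open ProbabilityTheory

/-- The input `(x, y, t)` regarded as a vector in ℝ^{2d+1}. -/
def concatInput (d : ℕ) (x y : Fin d → ℝ) (t : ℝ) : Fin (2 * d + 1) → ℝ :=
  fun k =>
    if h : (k : ℕ) < d then x ⟨k, h⟩
    else if h' : (k : ℕ) < 2 * d then y ⟨(k : ℕ) - d, by omega⟩
    else t

/-- The selection function: `g (x, y, t) = x` if `t ≥ 0`, and `y` if `t < 0`. -/
noncomputable def selection (d : ℕ) (x y : Fin d → ℝ) (t : ℝ) : Fin d → ℝ :=
  if 0 ≤ t then x else y

/-!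
GeLU is within 1 of ReLU: the gap at `z` is `|z| p` for the Gaussian tail probability `p` beyond
`z`, Chebyshev's inequality gives `z² p ≤ 1`, hence `(|z| p)² ≤ z² p ≤ 1`. ReLU selects exactly:
if `|a|, |b| ≤ |s|` then `relu (a + s) + relu (b - s) - relu s - relu (-s)` is `a` or `b`
according to the sign of `s`. Scaling the inputs by `L` and taking `s = c t` with `c |t| ≥ L M`,
the four GeLU units behind each output coordinate compute `L · g (x, y, t)` up to an error of 4,
and `L = 4 / ε` gives the bound.
-/

open MeasureTheory Matrix NNReal

lemma sq_mul_gaussianReal_abs_ge_le (v : ℝ≥0) {c : ℝ} (hc : 0 < c) :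
    c ^ 2 * (gaussianReal 0 v).real {x | c ≤ |x|} ≤ v := by
  have h := meas_ge_le_variance_div_sq (memLp_id_gaussianReal (μ := 0) (v := v) 2) hc
  simp only [id, integral_id_gaussianReal, sub_zero, variance_id_gaussianReal] at h
  have := ENNReal.toReal_le_of_le_ofReal (by positivity) h
  rwa [le_div_iff₀ (by positivity), ← measureReal_def, mul_comm] at this

lemma sq_mul_stdGaussianCDF_le_one {z : ℝ} (hz : z < 0) : z ^ 2 * stdGaussianCDF z ≤ 1 := by
  have hsub : Set.Iic z ⊆ {x | -z ≤ |x|} := fun x (hx : x ≤ z) =>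
    (neg_le_neg hx).trans (neg_le_abs x)
  calc z ^ 2 * stdGaussianCDF z
      ≤ (-z) ^ 2 * (gaussianReal 0 1).real {x | -z ≤ |x|} := by
        rw [stdGaussianCDF, cdf_eq_real, neg_sq]
        exact mul_le_mul_of_nonneg_left (measureReal_mono hsub) (sq_nonneg z)
    _ ≤ 1 := by exact_mod_cast sq_mul_gaussianReal_abs_ge_le 1 (neg_pos.2 hz)

lemma sq_mul_one_sub_stdGaussianCDF_le_one {z : ℝ} (hz : 0 < z) :
    z ^ 2 * (1 - stdGaussianCDF z) ≤ 1 := by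
  have hsub : (Set.Iic z)ᶜ ⊆ {x | z ≤ |x|} := fun x (hx : ¬x ≤ z) =>
    (not_le.1 hx).le.trans (le_abs_self x)
  calc z ^ 2 * (1 - stdGaussianCDF z)
      ≤ z ^ 2 * (gaussianReal 0 1).real {x | z ≤ |x|} := by
        rw [stdGaussianCDF, cdf_eq_real, ← probReal_compl_eq_one_sub measurableSet_Iic]
        exact mul_le_mul_of_nonneg_left (measureReal_mono hsub) (sq_nonneg z)
    _ ≤ 1 := by exact_mod_cast sq_mul_gaussianReal_abs_ge_le 1 hz

lemma abs_mul_le_one_of_sq_mul_le_one {z p : ℝ} (hp₀ : 0 ≤ p) (hp₁ : p ≤ 1)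
    (h : z ^ 2 * p ≤ 1) : |z| * p ≤ 1 := by
  have : (|z| * p) ^ 2 ≤ 1 := by
    rw [mul_pow, sq_abs]; nlinarith
  nlinarith [abs_nonneg z]

lemma abs_gelu_sub_max_le_one (z : ℝ) : |gelu z - max z 0| ≤ 1 := by
  have h₀ : 0 ≤ stdGaussianCDF z := cdf_nonneg _ z
  have h₁ : stdGaussianCDF z ≤ 1 := cdf_le_one _ z
  rcases lt_trichotomy z 0 with hz | rfl | hz
  · rw [max_eq_right hz.le, sub_zero, gelu, abs_mul, abs_of_nonneg h₀]
    exact abs_mul_le_one_of_sq_mul_le_one h₀ h₁ (sq_mul_stdGaussianCDF_le_one hz)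
  · simp [gelu]
  · rw [max_eq_left hz.le, gelu, ← abs_neg, neg_sub, ← mul_one_sub, abs_mul,
      abs_of_nonneg (sub_nonneg.2 h₁)]
    exact abs_mul_le_one_of_sq_mul_le_one (by linarith) (by linarith)
      (sq_mul_one_sub_stdGaussianCDF_le_one hz)

lemma max_add_max_sub_sub_max_sub_max {a b s : ℝ} (ha : |a| ≤ |s|) (hb : |b| ≤ |s|) :
    max (a + s) 0 + max (b - s) 0 - max s 0 - max (-s) 0 = if 0 ≤ s then a else b := by
  split_ifs with hs
  · rw [abs_of_nonneg hs, abs_le] at ha hb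
    rw [max_eq_left (by linarith), max_eq_right (by linarith), max_eq_left hs,
      max_eq_right (by linarith)]
    ring
  · rw [abs_of_neg (not_le.1 hs), abs_le] at ha hb
    rw [max_eq_right (by linarith), max_eq_left (by linarith), max_eq_right (by linarith),
      max_eq_left (by linarith)]
    ring

lemma abs_gelu_add_gelu_sub_sub_ite_le {a b s : ℝ} (ha : |a| ≤ |s|) (hb : |b| ≤ |s|) :
    |gelu (a + s) + gelu (b - s) - gelu s - gelu (-s) - (if 0 ≤ s then a else b)| ≤ 4 := by
  rw [← max_add_max_sub_sub_max_sub_max ha hb]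
  have h₁ := abs_gelu_sub_max_le_one (a + s)
  have h₂ := abs_gelu_sub_max_le_one (b - s)
  have h₃ := abs_gelu_sub_max_le_one s
  have h₄ := abs_gelu_sub_max_le_one (-s)
  rw [abs_le] at *
  constructor <;> linarith

lemma concatInput_eq_append (d : ℕ) (x y : Fin d → ℝ) (t : ℝ) :
    concatInput d x y t = Fin.append (Fin.append x y) ![t] ∘ finCongr (by omega) := by
  ext k
  obtain ⟨j, rfl⟩ := (finCongr (by omega : 2 * d + 1 = d + d + 1)).symm.surjective k
  simp only [Function.comp_apply, Equiv.apply_symm_apply]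
  induction j using Fin.addCases with
  | left j =>
    induction j using Fin.addCases with
    | left i => simp [concatInput]
    | right i =>
      rw [Fin.append_left, Fin.append_right]
      simp [concatInput, show (i : ℕ) + d < 2 * d by omega]
  | right i =>
    rw [Fin.append_right]
    simp [concatInput, show ¬2 * d < d by omega]

lemma concatInput_dotProduct_concatInput (d : ℕ) (a b x y : Fin d → ℝ) (c t : ℝ) :
    concatInput d a b c ⬝ᵥ concatInput d x y t = a ⬝ᵥ x + b ⬝ᵥ y + c * t := by
  rw [concatInput_eq_append, concatInput_eq_append, comp_equiv_dotProduct_comp_equiv]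
  simp only [dotProduct, Fin.sum_univ_add, Fin.append_left, Fin.append_right, Fin.sum_univ_one]
  rfl

lemma comp_concatInput (f : ℝ → ℝ) (d : ℕ) (x y : Fin d → ℝ) (t : ℝ) :
    f ∘ concatInput d x y t = concatInput d (f ∘ x) (f ∘ y) (f t) := by
  ext k
  simp only [Function.comp_apply, concatInput]
  split_ifs <;> rfl

lemma concatInput_last (d : ℕ) (x y : Fin d → ℝ) (t : ℝ) :
    concatInput d x y t (Fin.last (2 * d)) = t := by
  simp [concatInput, show ¬2 * d < d by omega]

noncomputable def selectionW₁ (d : ℕ) (L c : ℝ) : Matrix (Fin (2 * d + 2)) (Fin (2 * d + 1)) ℝ :=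
  of <| vecCons (-c • Pi.single (Fin.last (2 * d)) 1)
    (of.symm (diagonal (concatInput d (fun _ => L) (fun _ => L) 0) +
      vecMulVec (concatInput d (fun _ => c) (fun _ => -c) c) (Pi.single (Fin.last (2 * d)) 1)))

noncomputable def selectionW₂ (d : ℕ) (L : ℝ) : Matrix (Fin d) (Fin (2 * d + 2)) ℝ :=
  of fun i => L⁻¹ • vecCons (-1) (concatInput d (Pi.single i 1) (Pi.single i 1) (-1))

lemma selectionW₁_mulVec (d : ℕ) (L c : ℝ) (x y : Fin d → ℝ) (t : ℝ) :
    selectionW₁ d L c *ᵥ concatInput d x y t =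
      vecCons (-(c * t))
        (concatInput d (fun i => L * x i + c * t) (fun i => L * y i - c * t) (c * t)) := by
  rw [selectionW₁, cons_mulVec, smul_dotProduct, single_dotProduct, concatInput_last]
  congr 1
  · simp
  · ext k
    simp only [Equiv.apply_symm_apply, add_mulVec, Pi.add_apply, mulVec_diagonal,
      vecMulVec_mulVec, single_dotProduct, concatInput_last, Pi.smul_apply, op_smul_eq_mul,
      one_mul]
    simp only [concatInput]
    split_ifs <;> ring

lemma selectionW₂_mulVec_cons (d : ℕ) (L u r : ℝ) (a b : Fin d → ℝ) (i : Fin d) :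
    (selectionW₂ d L *ᵥ vecCons u (concatInput d a b r)) i = L⁻¹ * (a i + b i - r - u) := by
  simp only [selectionW₂, mulVec, of_apply, smul_dotProduct, cons_dotProduct_cons,
    concatInput_dotProduct_concatInput, single_dotProduct, smul_eq_mul]
  ring

lemma selectionW₂_mulVec_selectionW₁_mulVec (σ : ℝ → ℝ) (d : ℕ) (L c : ℝ) (x y : Fin d → ℝ)
    (t : ℝ) (i : Fin d) :
    (selectionW₂ d L *ᵥ fun j => σ ((selectionW₁ d L c *ᵥ concatInput d x y t) j)) i =
      L⁻¹ * (σ (L * x i + c * t) + σ (L * y i - c * t) - σ (c * t) - σ (-(c * t))) := by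
  rw [selectionW₁_mulVec]
  change (selectionW₂ d L *ᵥ σ ∘ Fin.cons _ _) i = _
  rw [Fin.comp_cons, comp_concatInput]
  exact selectionW₂_mulVec_cons ..

lemma abs_inv_mul_gelu_selection_sub_ite_le {L c a b t : ℝ} (hL : 0 < L) (hc : 0 < c)
    (ha : L * |a| ≤ c * |t|) (hb : L * |b| ≤ c * |t|) :
    |L⁻¹ * (gelu (L * a + c * t) + gelu (L * b - c * t) - gelu (c * t) - gelu (-(c * t))) -
      (if 0 ≤ t then a else b)| ≤ 4 / L := by
  have hscale : ∀ u, |L * u| = L * |u| := fun u => by rw [abs_mul, abs_of_pos hL]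
  have hct : |c * t| = c * |t| := by rw [abs_mul, abs_of_pos hc]
  have key := abs_gelu_add_gelu_sub_sub_ite_le (a := L * a) (b := L * b) (s := c * t)
    (by rw [hscale, hct]; exact ha) (by rw [hscale, hct]; exact hb)
  have hsel : (if 0 ≤ c * t then L * a else L * b) = L * (if 0 ≤ t then a else b) := by
    simp only [mul_nonneg_iff_of_pos_left hc, mul_ite]
  rw [hsel] at key
  set E := gelu (L * a + c * t) + gelu (L * b - c * t) - gelu (c * t) - gelu (-(c * t))
  set sel := if 0 ≤ t then a else b
  calc |L⁻¹ * E - sel| = |L⁻¹ * (E - L * sel)| := by rw [mul_sub L⁻¹ E, inv_mul_cancel_left₀ hL.ne']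
    _ = L⁻¹ * |E - L * sel| := by rw [abs_mul, abs_of_pos (inv_pos.2 hL)]
    _ ≤ L⁻¹ * 4 := by gcongr
    _ = 4 / L := inv_mul_eq_div L 4

theorem gelu_mlp_approx_selection_general (d : ℕ)
    (ε α M : ℝ) (hε : 0 < ε) (hα : 0 < α) (hM : 0 < M) :
    ∃ (W₁ : Matrix (Fin (2 * d + 2)) (Fin (2 * d + 1)) ℝ) (b₁ : Fin (2 * d + 2) → ℝ)
      (W₂ : Matrix (Fin d) (Fin (2 * d + 2)) ℝ),
      ∀ (x y : Fin d → ℝ) (t : ℝ),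
        (∀ i, x i ∈ Set.Icc (-M) M) → (∀ i, y i ∈ Set.Icc (-M) M) → α ≤ |t| →
        ‖W₂.mulVec (fun j => gelu ((W₁.mulVec (concatInput d x y t) + b₁) j)) -
          selection d x y t‖ ≤ ε := by
  set L := 4 / ε
  set c := L * M / α
  have hL : 0 < L := by positivity
  refine ⟨selectionW₁ d L c, 0, selectionW₂ d L, fun x y t hx hy ht => ?_⟩
  have hbound : ∀ u ∈ Set.Icc (-M) M, L * |u| ≤ c * |t| := fun u hu =>
    calc L * |u| ≤ L * M := by gcongr; exact abs_le.2 hu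
      _ = c * α := by simp only [c]; field_simp
      _ ≤ c * |t| := by gcongr
  rw [add_zero, pi_norm_le_iff_of_nonneg hε.le]
  intro i
  rw [Pi.sub_apply, selectionW₂_mulVec_selectionW₁_mulVec, Real.norm_eq_abs,
    show selection d x y t i = if 0 ≤ t then x i else y i by unfold selection; split_ifs <;> rfl]
  calc _ ≤ 4 / L := abs_inv_mul_gelu_selection_sub_ite_le hL (by positivity)
        (hbound _ (hx i)) (hbound _ (hy i))
    _ = ε := div_div_cancel₀ four_ne_zero

/-- The paper's selection lemma: a two-layer GeLU MLP of hidden dimension 2d + 2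
approximates the selection function on `[−M, M]^d × [−M, M]^d × {t : |t| ≥ α}`;
the norm on `Fin d → ℝ` is the sup (max-coordinate) norm. -/
theorem gelu_mlp_approx_selection (d : ℕ) (hd : 1 ≤ d)
    (ε α M : ℝ) (hε : 0 < ε) (hα : 0 < α) (hM : 0 < M) :
    ∃ (W₁ : Matrix (Fin (2 * d + 2)) (Fin (2 * d + 1)) ℝ) (b₁ : Fin (2 * d + 2) → ℝ)
      (W₂ : Matrix (Fin d) (Fin (2 * d + 2)) ℝ),
      ∀ (x y : Fin d → ℝ) (t : ℝ),
        (∀ i, x i ∈ Set.Icc (-M) M) → (∀ i, y i ∈ Set.Icc (-M) M) → α ≤ |t| →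
        ‖W₂.mulVec (fun j => gelu ((W₁.mulVec (concatInput d x y t) + b₁) j)) -
          selection d x y t‖ ≤ ε :=
  gelu_mlp_approx_selection_general d ε α M hε hα hM
end
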